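/- arXiv:2510.01368 — 6 statements merged into one kernel-verified Lean document; each statement's English description precedes it below -/
import Mathlib

section
/- Let T be a closed densely defined operator on a Hilbert space H and let A be a C*-subalgebra of B(H) such that the bounded transform F(T) = T(1+T*T)^{-1/2} is a multiplier of A. Then the set (1+T*T)^{-1/2}A is norm-dense in A if and only if (1+T*T)^{-1}A is norm-dense in A. -/
/-!
Here `F` is the bounded transform of `T`, so `R := 1 - F⋆F = (1+T⋆T)⁻¹` and `S := √R` is
`(1+T⋆T)^{-1/2}`. Since `R·A = S·(S·A)` and left multiplication by `S` is continuous, density of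
`S·A` implies that of `R·A`. Conversely, `S` maps `A` into its closure, being a norm limit of
polynomials in the left multiplier `R`; hence `R·A = S·(S·A) ⊆ S·closure A ⊆ closure (S·A)`.
-/

set_option synthInstance.maxHeartbeats 1000000

/-- `T` is a multiplier of the set `A` of bounded operators. -/
def IsMultiplierOf {E : Type*} [NormedAddCommGroup E] [InnerProductSpace ℂ E] [CompleteSpace E]
    (A : Set (E →L[ℂ] E)) (T : E →L[ℂ] E) : Prop :=
  ∀ a ∈ A, T * a ∈ A ∧ a * T ∈ A

open Set in
theorem subset_closure_image_iff_subset_closure_image_image {X : Type*} [TopologicalSpace X]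
    {f : X → X} (hf : Continuous f) {s : Set X} (hfs : f '' s ⊆ closure s) :
    s ⊆ closure (f '' s) ↔ s ⊆ closure (f '' (f '' s)) := by
  constructor
  · intro h
    have : f '' s ⊆ closure (f '' (f '' s)) :=
      (image_mono h).trans (image_closure_subset_closure_image hf)
    exact h.trans (closure_minimal this isClosed_closure)
  · intro h
    have : f '' (f '' s) ⊆ closure (f '' s) :=
      (image_mono hfs).trans (image_closure_subset_closure_image hf)
    exact h.trans (closure_minimal this isClosed_closure)

namespace Submodule

variable {R B : Type*} [CommSemiring R] [StarRing R] [Semiring B] [StarRing B] [Algebra R B]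
  [StarModule R B]

/-- Asking `star x` to be a left multiplier as well makes this a star subalgebra, so that it
contains the elemental star subalgebra of each of its selfadjoint elements. -/
def starLeftMultipliers (C : Submodule R B) : StarSubalgebra R B where
  carrier := {x | ∀ c ∈ C, x * c ∈ C ∧ star x * c ∈ C}
  mul_mem' {x y} hx hy c hc := by
    refine ⟨?_, ?_⟩
    · rw [mul_assoc]; exact (hx _ (hy c hc).1).1
    · rw [star_mul, mul_assoc]; exact (hy _ (hx c hc).2).2
  one_mem' c hc := by simpa using hc
  add_mem' {x y} hx hy c hc := by
    simp only [star_add, add_mul]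
    exact ⟨C.add_mem (hx c hc).1 (hy c hc).1, C.add_mem (hx c hc).2 (hy c hc).2⟩
  algebraMap_mem' r c hc := by
    simp only [Algebra.algebraMap_eq_smul_one, star_smul, star_one, smul_mul_assoc, one_mul]
    exact ⟨C.smul_mem r hc, C.smul_mem _ hc⟩
  star_mem' {x} hx c hc := by
    rw [star_star]; exact (hx c hc).symm

theorem mem_starLeftMultipliers {C : Submodule R B} {x : B} :
    x ∈ C.starLeftMultipliers ↔ ∀ c ∈ C, x * c ∈ C ∧ star x * c ∈ C :=
  Iff.rfl

theorem isClosed_starLeftMultipliers [TopologicalSpace B] [IsTopologicalSemiring B]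
    [ContinuousStar B] {C : Submodule R B} (hC : IsClosed (C : Set B)) :
    IsClosed (C.starLeftMultipliers : Set B) := by
  have : (C.starLeftMultipliers : Set B) =
      ⋂ c ∈ C, (· * c) ⁻¹' C ∩ (fun x ↦ star x * c) ⁻¹' C := by
    ext x
    simp [mem_starLeftMultipliers]
  rw [this]
  exact isClosed_biInter fun c _ ↦
    (hC.preimage (continuous_mul_const c)).inter
      (hC.preimage ((continuous_mul_const c).comp continuous_star))

end Submodule

theorem Submodule.cfc_mul_mem {B : Type*} [Ring B] [StarRing B] [Algebra ℝ B] [TopologicalSpace B]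
    [IsTopologicalRing B] [ContinuousStar B] [StarModule ℝ B]
    [ContinuousFunctionalCalculus ℝ B IsSelfAdjoint] {C : Submodule ℝ B}
    (hC : IsClosed (C : Set B)) {a : B} (ha : IsSelfAdjoint a) (haC : ∀ c ∈ C, a * c ∈ C)
    (f : ℝ → ℝ) {c : B} (hc : c ∈ C) : cfc f a * c ∈ C := by
  have ha_mem : a ∈ C.starLeftMultipliers := fun c hc ↦
    ⟨haC c hc, by rw [ha.star_eq]; exact haC c hc⟩
  exact (StarAlgebra.elemental.le_of_mem (C.isClosed_starLeftMultipliers hC) ha_mem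
    (cfc_mem_elemental f a) c hc).1

section IsMultiplierOf

variable {E : Type*} [NormedAddCommGroup E] [InnerProductSpace ℂ E] [CompleteSpace E]

theorem isMultiplierOf_one (A : Set (E →L[ℂ] E)) : IsMultiplierOf A 1 :=
  fun a ha ↦ by simpa using ha

theorem IsMultiplierOf.mul {A : Set (E →L[ℂ] E)} {F G : E →L[ℂ] E} (hF : IsMultiplierOf A F)
    (hG : IsMultiplierOf A G) : IsMultiplierOf A (F * G) := fun a ha ↦
  ⟨mul_assoc F G a ▸ (hF _ (hG a ha).1).1, (mul_assoc a F G).symm ▸ (hG _ (hF a ha).2).2⟩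

theorem IsMultiplierOf.sub {S : Type*} [SetLike S (E →L[ℂ] E)] [AddSubgroupClass S (E →L[ℂ] E)]
    {A : S} {F G : E →L[ℂ] E}
    (hF : IsMultiplierOf A F) (hG : IsMultiplierOf A G) : IsMultiplierOf A (F - G) := fun a ha ↦
  ⟨sub_mul F G a ▸ sub_mem (hF a ha).1 (hG a ha).1,
    mul_sub a F G ▸ sub_mem (hF a ha).2 (hG a ha).2⟩

theorem IsMultiplierOf.star {S : Type*} [SetLike S (E →L[ℂ] E)] [StarMemClass S (E →L[ℂ] E)]
    {A : S} {F : E →L[ℂ] E}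
    (hF : IsMultiplierOf A F) : IsMultiplierOf A (star F) := fun a ha ↦ by
  have h := hF _ (star_mem ha)
  exact ⟨by simpa using star_mem h.2, by simpa using star_mem h.1⟩

end IsMultiplierOf

theorem stmt0_general {E : Type*} [NormedAddCommGroup E] [InnerProductSpace ℂ E] [CompleteSpace E]
    (A : NonUnitalStarSubalgebra ℂ (E →L[ℂ] E))
    (F : E →L[ℂ] E) (hF : ‖F‖ ≤ 1)
    (hFmul : IsMultiplierOf (A : Set (E →L[ℂ] E)) F) :
    ((A : Set (E →L[ℂ] E)) ⊆
        closure ((fun a => CFC.sqrt (1 - star F * F) * a) '' (A : Set (E →L[ℂ] E)))) ↔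
      ((A : Set (E →L[ℂ] E)) ⊆
        closure ((fun a => (1 - star F * F) * a) '' (A : Set (E →L[ℂ] E)))) := by
  set R := 1 - star F * F
  have hR : 0 ≤ R := by
    rw [sub_nonneg, ← CStarAlgebra.norm_le_one_iff_of_nonneg _ (star_mul_self_nonneg F),
      CStarRing.norm_star_mul_self]
    exact mul_le_one₀ hF (norm_nonneg F) hF
  have hRmul : IsMultiplierOf A R := (isMultiplierOf_one _).sub (hFmul.star.mul hFmul)
  let C : Submodule ℝ (E →L[ℂ] E) := A.toNonUnitalSubalgebra.toSubmodule.restrictScalars ℝ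
  have hSA : (CFC.sqrt R * ·) '' A ⊆ closure A := by
    rintro _ ⟨a, ha, rfl⟩
    rw [CFC.sqrt_eq_cfc, cfc_nnreal_eq_real _ R hR]
    refine C.topologicalClosure.cfc_mul_mem C.isClosed_topologicalClosure hR.isSelfAdjoint
      (fun c hc ↦ ?_) _ (subset_closure ha)
    exact map_mem_closure (continuous_const_mul R) hc fun a ha ↦ (hRmul a ha).1
  rw [subset_closure_image_iff_subset_closure_image_image (continuous_const_mul _) hSA,
    Set.image_image]
  simp_rw [← mul_assoc, CFC.sqrt_mul_sqrt_self R hR]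

/-- Let `T` be a closed densely defined operator on a Hilbert space, encoded here
through its bounded transform `F = F(T) = T(1+T*T)^{-1/2}` (so that `‖F‖ ≤ 1` and
`(1+T*T)^{-1/2} = (1 - F*F)^{1/2}` and `(1+T*T)^{-1} = 1 - F*F`), and let `A` be a
(closed, non-unital) C*-subalgebra of `B(H)` such that `F` is a multiplier of `A`.
Then `(1+T*T)^{-1/2}·A` is norm-dense in `A` iff `(1+T*T)^{-1}·A` is norm-dense in `A`. -/
theorem stmt0 {E : Type*} [NormedAddCommGroup E] [InnerProductSpace ℂ E] [CompleteSpace E]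
    (A : NonUnitalStarSubalgebra ℂ (E →L[ℂ] E))
    (hAclosed : IsClosed (A : Set (E →L[ℂ] E)))
    (F : E →L[ℂ] E) (hF : ‖F‖ ≤ 1)
    (hFmul : IsMultiplierOf (A : Set (E →L[ℂ] E)) F) :
    ((A : Set (E →L[ℂ] E)) ⊆
        closure ((fun a => CFC.sqrt (1 - star F * F) * a) '' (A : Set (E →L[ℂ] E)))) ↔
      ((A : Set (E →L[ℂ] E)) ⊆
        closure ((fun a => (1 - star F * F) * a) '' (A : Set (E →L[ℂ] E)))) :=
  stmt0_general A F hF hFmul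
end

section
/- Let H be a self-adjoint operator on a Hilbert space and A a C*-algebra of bounded operators on that space. If there exist norm-dense subsets A₊, A₋ of A with (H+i)^{-1}A₊ ⊆ A dense and (H-i)^{-1}A₋ ⊆ A dense, then for every f ∈ C₀(ℝ) the operator f(H) is a multiplier of A, i.e. f(H)a ∈ A and a f(H) ∈ A for all a ∈ A. -/
open scoped ZeroAtInfty
open OnePoint

/-!
The set of `f ∈ C₀(ℝ)` for which `f(H)` is a multiplier of `A` is a closed non-unital
*-subalgebra. Density of `Ap` upgrades `(H+i)⁻¹ Ap ⊆ A` to `(H+i)⁻¹ A ⊆ A`, and likewise for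
`H-i`; since `((H+i)⁻¹)* = (H-i)⁻¹`, the resolvent `(x+i)⁻¹` lies in that subalgebra. It
separates the points of `ℝ` and vanishes nowhere, so by Stone–Weierstrass (on the one-point
compactification) it generates a dense *-subalgebra of `C₀(ℝ)`.
-/

lemma IsClosed.mul_mem_of_subset_closure {B : Type*} [Mul B] [TopologicalSpace B] [ContinuousMul B]
    {A S : Set B} (hA : IsClosed A) (hS : A ⊆ closure S) {x : B} (hx : ∀ a ∈ S, x * a ∈ A) :
    ∀ a ∈ A, x * a ∈ A :=
  fun _ ha => hA.closure_subset (map_mem_closure (continuous_const_mul x) (hS ha) hx)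

namespace NonUnitalStarSubalgebra

variable {R B : Type*} [CommSemiring R] [NonUnitalSemiring B] [StarRing B] [Module R B]
  [IsScalarTower R B B] [SMulCommClass R B B]

def multipliers (A : NonUnitalStarSubalgebra R B) : NonUnitalStarSubalgebra R B where
  carrier := {x | ∀ a ∈ A, x * a ∈ A ∧ a * x ∈ A}
  zero_mem' a _ := by simp only [zero_mul, mul_zero, zero_mem, and_self]
  add_mem' hx hy a ha := by
    rw [add_mul, mul_add]
    exact ⟨add_mem (hx a ha).1 (hy a ha).1, add_mem (hx a ha).2 (hy a ha).2⟩
  mul_mem' {x y} hx hy a ha := by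
    rw [mul_assoc, ← mul_assoc a]
    exact ⟨(hx _ (hy a ha).1).1, (hy _ (hx a ha).2).2⟩
  smul_mem' r x hx a ha := by
    rw [smul_mul_assoc, mul_smul_comm]
    exact ⟨SMulMemClass.smul_mem r (hx a ha).1, SMulMemClass.smul_mem r (hx a ha).2⟩
  star_mem' {x} hx a ha := by
    have h := hx (star a) (star_mem ha)
    exact ⟨by simpa using star_mem h.2, by simpa using star_mem h.1⟩

variable {A : NonUnitalStarSubalgebra R B}

lemma mem_multipliers {x : B} : x ∈ A.multipliers ↔ ∀ a ∈ A, x * a ∈ A ∧ a * x ∈ A := Iff.rfl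

lemma mem_multipliers_of_mul_mem {x : B} (hx : ∀ a ∈ A, x * a ∈ A)
    (hx' : ∀ a ∈ A, star x * a ∈ A) : x ∈ A.multipliers := fun a ha =>
  ⟨hx a ha, by simpa using star_mem (hx' (star a) (star_mem ha))⟩

variable [TopologicalSpace B] [ContinuousMul B]

lemma isClosed_multipliers (hA : IsClosed (A : Set B)) : IsClosed (A.multipliers : Set B) := by
  have h : (A.multipliers : Set B) = ⋂ a ∈ A, (· * a) ⁻¹' A ∩ (a * ·) ⁻¹' A := by
    ext x
    simp [mem_multipliers]
  rw [h]
  exact isClosed_biInter fun a _ =>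
    (hA.preimage (continuous_mul_const a)).inter (hA.preimage (continuous_const_mul a))

end NonUnitalStarSubalgebra

namespace ZeroAtInftyContinuousMap

variable {X 𝕜 : Type*} [TopologicalSpace X] [T2Space X] [RCLike 𝕜]

noncomputable def toOnePoint : C₀(X, 𝕜) →⋆ₙₐ[𝕜] C(OnePoint X, 𝕜) where
  toFun f := continuousMapMk f 0 <| by
    rw [Filter.coclosedCompact_eq_cocompact]
    exact f.zero_at_infty'
  map_smul' _ _ := by ext x; cases x <;> simp [continuousMapMk]
  map_zero' := by ext x; cases x <;> rfl
  map_add' _ _ := by ext x; cases x <;> simp [continuousMapMk]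
  map_mul' _ _ := by ext x; cases x <;> simp [continuousMapMk]
  map_star' _ := by ext x; cases x <;> simp [continuousMapMk]

@[simp] lemma toOnePoint_coe (f : C₀(X, 𝕜)) (x : X) : toOnePoint f (x : OnePoint X) = f x := rfl

@[simp] lemma toOnePoint_infty (f : C₀(X, 𝕜)) : toOnePoint f ∞ = 0 := rfl

lemma norm_le_norm_toOnePoint (f : C₀(X, 𝕜)) : ‖f‖ ≤ ‖toOnePoint f‖ := by
  rw [← norm_toBCF_eq_norm]
  exact (BoundedContinuousFunction.norm_le (norm_nonneg _)).mpr fun x =>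
    (toOnePoint f).norm_coe_le_norm (x : OnePoint X)

lemma norm_le_two_mul_norm_toOnePoint_sub (f : C₀(X, 𝕜)) (c : 𝕜) :
    ‖f‖ ≤ 2 * ‖toOnePoint f - algebraMap 𝕜 _ c‖ := by
  set g := toOnePoint f - algebraMap 𝕜 _ c
  have hc : ‖c‖ ≤ ‖g‖ := by
    simpa [g] using g.norm_coe_le_norm ∞
  calc ‖f‖ ≤ ‖toOnePoint f‖ := norm_le_norm_toOnePoint f
    _ = ‖g + algebraMap 𝕜 _ c‖ := by simp [g]
    _ ≤ ‖g‖ + ‖c‖ := by simpa using norm_add_le g (algebraMap 𝕜 _ c)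
    _ ≤ 2 * ‖g‖ := by linarith

theorem dense_of_separatesPoints (B : NonUnitalStarSubalgebra 𝕜 C₀(X, 𝕜))
    (hsep : ∀ ⦃x y : X⦄, x ≠ y → ∃ f ∈ B, f x ≠ f y) (hvan : ∀ x, ∃ f ∈ B, f x ≠ 0) :
    Dense (B : Set C₀(X, 𝕜)) := by
  set B' := StarAlgebra.adjoin 𝕜 (B.map toOnePoint : Set C(OnePoint X, 𝕜))
  have hsep' : B'.SeparatesPoints := by
    suffices ∀ ⦃x y : OnePoint X⦄, x ≠ y → ∃ f ∈ B, toOnePoint f x ≠ toOnePoint f y by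
      intro x y hxy
      obtain ⟨f, hf, hne⟩ := this hxy
      exact ⟨_, ⟨toOnePoint f, StarAlgebra.subset_adjoin 𝕜 _ ⟨f, hf, rfl⟩, rfl⟩, hne⟩
    intro x y hxy
    induction x using OnePoint.rec with
    | infty => induction y using OnePoint.rec with
      | infty => exact absurd rfl hxy
      | coe y =>
        obtain ⟨f, hf, hne⟩ := hvan y
        exact ⟨f, hf, by simpa using hne.symm⟩
    | coe x => induction y using OnePoint.rec with
      | infty =>
        obtain ⟨f, hf, hne⟩ := hvan x
        exact ⟨f, hf, by simpa using hne⟩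
      | coe y => simpa using hsep (fun h => hxy (congrArg _ h))
  have hclosure :=
    ContinuousMap.starSubalgebra_topologicalClosure_eq_top_of_separatesPoints B' hsep'
  refine Metric.dense_iff.mpr fun f ε hε => ?_
  have hf : toOnePoint f ∈ closure (B' : Set C(OnePoint X, 𝕜)) := by
    change _ ∈ B'.topologicalClosure
    simp [hclosure]
  obtain ⟨P, hPB', hP⟩ := Metric.mem_closure_iff.mp hf (ε / 2) (by positivity)
  have hP' : P ∈ Submodule.span 𝕜 {1} ⊔ (B.map toOnePoint).toSubmodule := by
    rw [← StarAlgebra.adjoin_nonUnitalStarSubalgebra_eq_span]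
    exact hPB'
  obtain ⟨_, hc, _, ⟨b, hb, rfl⟩, rfl⟩ := Submodule.mem_sup.mp hP'
  obtain ⟨c, rfl⟩ := Submodule.mem_span_singleton.mp hc
  refine ⟨b, ?_, hb⟩
  rw [dist_eq_norm] at hP
  change ‖toOnePoint f - (c • 1 + toOnePoint b)‖ < ε / 2 at hP
  rw [Metric.mem_ball, dist_eq_norm]
  calc ‖b - f‖ = ‖f - b‖ := norm_sub_rev _ _
    _ ≤ 2 * ‖toOnePoint (f - b) - algebraMap 𝕜 _ c‖ := norm_le_two_mul_norm_toOnePoint_sub _ c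
    _ = 2 * ‖toOnePoint f - (c • 1 + toOnePoint b)‖ := by
      rw [map_sub, Algebra.algebraMap_eq_smul_one]; congr 2; abel
    _ < ε := by linarith

theorem dense_adjoin_singleton_of_injective {g : C₀(X, 𝕜)} (hinj : Function.Injective g)
    (hne : ∀ x, g x ≠ 0) : Dense (NonUnitalStarAlgebra.adjoin 𝕜 {g} : Set C₀(X, 𝕜)) :=
  have hg := NonUnitalStarAlgebra.self_mem_adjoin_singleton 𝕜 g
  dense_of_separatesPoints _ (fun _ _ hxy => ⟨g, hg, hinj.ne hxy⟩) (fun x => ⟨g, hg, hne x⟩)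

end ZeroAtInftyContinuousMap

theorem dense_adjoin_resolvent {r : C₀(ℝ, ℂ)} (hr : ∀ x : ℝ, r x = ((x : ℂ) + Complex.I)⁻¹) :
    Dense (NonUnitalStarAlgebra.adjoin ℂ {r} : Set C₀(ℝ, ℂ)) := by
  refine ZeroAtInftyContinuousMap.dense_adjoin_singleton_of_injective (fun x y hxy => ?_)
    fun x => by simp [hr, Complex.ext_iff]
  simpa [hr] using hxy

theorem stmt1_general {E : Type*} [NormedAddCommGroup E] [InnerProductSpace ℂ E] [CompleteSpace E]
    (A : NonUnitalStarSubalgebra ℂ (E →L[ℂ] E))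
    (hAclosed : IsClosed (A : Set (E →L[ℂ] E)))
    (φ : C₀(ℝ, ℂ) →⋆ₙₐ[ℂ] (E →L[ℂ] E)) (hφ : Continuous φ)
    (rp rm : C₀(ℝ, ℂ))
    (hrp : ∀ x : ℝ, rp x = ((x : ℂ) + Complex.I)⁻¹)
    (hrm : ∀ x : ℝ, rm x = ((x : ℂ) - Complex.I)⁻¹)
    (Ap Am : Set (E →L[ℂ] E))
    (hApdense : (A : Set (E →L[ℂ] E)) ⊆ closure Ap)
    (hAmdense : (A : Set (E →L[ℂ] E)) ⊆ closure Am)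
    (hpmem : ∀ a ∈ Ap, φ rp * a ∈ A)
    (hmmem : ∀ a ∈ Am, φ rm * a ∈ A) :
    ∀ f : C₀(ℝ, ℂ), ∀ a ∈ A, φ f * a ∈ A ∧ a * φ f ∈ A := by
  have hstar : star rp = rm := by
    ext x
    simp [hrp, hrm, Complex.ext_iff]
  have hmult : φ rp ∈ A.multipliers := by
    refine NonUnitalStarSubalgebra.mem_multipliers_of_mul_mem
      (hAclosed.mul_mem_of_subset_closure hApdense hpmem) ?_
    rw [← map_star, hstar]
    exact hAclosed.mul_mem_of_subset_closure hAmdense hmmem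
  have hadjoin : NonUnitalStarAlgebra.adjoin ℂ {rp} ≤ A.multipliers.comap φ :=
    NonUnitalStarAlgebra.adjoin_le (Set.singleton_subset_iff.mpr hmult)
  have hclosed : IsClosed (A.multipliers.comap φ : Set C₀(ℝ, ℂ)) :=
    (NonUnitalStarSubalgebra.isClosed_multipliers hAclosed).preimage hφ
  intro f
  exact closure_minimal hadjoin hclosed (dense_adjoin_resolvent hrp f)

/-- Let `H` be a self-adjoint operator on a Hilbert space, encoded through its
continuous functional calculus `φ : C₀(ℝ) → B(E)` (a continuous non-unital *-homomorphism sending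
`f ↦ f(H)`), and let `A ⊆ B(E)` be a C*-algebra (a closed non-unital star subalgebra).  Denote by
`rp, rm ∈ C₀(ℝ)` the resolvent functions `x ↦ (x ± i)⁻¹`, so that `φ rp = (H+i)⁻¹` and
`φ rm = (H-i)⁻¹`.  If there are norm-dense subsets `Ap, Am` of `A` with `(H+i)⁻¹·Ap ⊆ A` dense
and `(H-i)⁻¹·Am ⊆ A` dense, then for every `f ∈ C₀(ℝ)` the operator `f(H)` is a multiplier of
`A`, i.e. `f(H)·a ∈ A` and `a·f(H) ∈ A` for all `a ∈ A`. -/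
theorem stmt1 {E : Type*} [NormedAddCommGroup E] [InnerProductSpace ℂ E] [CompleteSpace E]
    (A : NonUnitalStarSubalgebra ℂ (E →L[ℂ] E))
    (hAclosed : IsClosed (A : Set (E →L[ℂ] E)))
    (φ : C₀(ℝ, ℂ) →⋆ₙₐ[ℂ] (E →L[ℂ] E)) (hφ : Continuous φ)
    (rp rm : C₀(ℝ, ℂ))
    (hrp : ∀ x : ℝ, rp x = ((x : ℂ) + Complex.I)⁻¹)
    (hrm : ∀ x : ℝ, rm x = ((x : ℂ) - Complex.I)⁻¹)
    (Ap Am : Set (E →L[ℂ] E))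
    (hApsub : Ap ⊆ (A : Set (E →L[ℂ] E))) (hAmsub : Am ⊆ (A : Set (E →L[ℂ] E)))
    (hApdense : (A : Set (E →L[ℂ] E)) ⊆ closure Ap)
    (hAmdense : (A : Set (E →L[ℂ] E)) ⊆ closure Am)
    (hpmem : ∀ a ∈ Ap, φ rp * a ∈ A)
    (hmmem : ∀ a ∈ Am, φ rm * a ∈ A)
    (hpdense : (A : Set (E →L[ℂ] E)) ⊆ closure ((fun a => φ rp * a) '' Ap))
    (hmdense : (A : Set (E →L[ℂ] E)) ⊆ closure ((fun a => φ rm * a) '' Am)) :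
    ∀ f : C₀(ℝ, ℂ), ∀ a ∈ A, φ f * a ∈ A ∧ a * φ f ∈ A :=
  stmt1_general A hAclosed φ hφ rp rm hrp hrm Ap Am hApdense hAmdense hpmem hmmem
end

section
/- Let H be a self-adjoint operator on a Hilbert space and A a C*-algebra of bounded operators such that (H+i)^{-1}A and (H-i)^{-1}A are dense subsets of A. Then the bounded transform F(H) = H(1+H²)^{-1/2} satisfies F(H)a ∈ A and aF(H) ∈ A for all a ∈ A. -/
/-!
The functions `h ∈ C₀(ℝ)` with `h(H)·A ⊆ A` form a closed subalgebra of `C₀(ℝ)` containing the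
resolvents `r± = (x ± i)⁻¹`, hence `s = r₊r₋ = (1 + x²)⁻¹`, and, `s` being self-adjoint, every
`f(s)` given by the continuous functional calculus; in particular `ρ = √s = (1 + x²)^{-1/2}`.
Since `x / (x + i) = 1 - i (x + i)⁻¹`, we get `F·r₊ = ρ - i r₊ρ` in this subalgebra, i.e.
`F(H)·(H + i)⁻¹·A ⊆ A`, and the density of `(H + i)⁻¹·A` in the closed algebra `A` gives
`F(H)·A ⊆ A`. Taking adjoints gives `A·F(H) ⊆ A`.
-/

open scoped ZeroAtInfty CStarAlgebra

namespace NonUnitalSubalgebra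

variable {R B : Type*} [CommSemiring R] [NonUnitalSemiring B] [Module R B]
  [IsScalarTower R B B]

def leftIdealizer (A : NonUnitalSubalgebra R B) : NonUnitalSubalgebra R B where
  carrier := {x | ∀ b ∈ A, x * b ∈ A}
  add_mem' hx hy b hb := by simpa only [add_mul] using add_mem (hx b hb) (hy b hb)
  zero_mem' b _ := by simpa only [zero_mul] using zero_mem A
  mul_mem' hx hy b hb := by simpa only [mul_assoc] using hx _ (hy b hb)
  smul_mem' c _ hx b hb := by simpa only [smul_mul_assoc] using SMulMemClass.smul_mem c (hx b hb)

variable {A : NonUnitalSubalgebra R B}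

theorem mem_leftIdealizer {x : B} : x ∈ A.leftIdealizer ↔ ∀ b ∈ A, x * b ∈ A := Iff.rfl

variable [TopologicalSpace B] [ContinuousMul B]

theorem isClosed_leftIdealizer (hA : IsClosed (A : Set B)) :
    IsClosed (A.leftIdealizer : Set B) := by
  have hcarrier : (A.leftIdealizer : Set B) = ⋂ b ∈ A, (· * b) ⁻¹' A := by
    ext x
    simp [mem_leftIdealizer]
  rw [hcarrier]
  exact isClosed_biInter fun b _ => hA.preimage (continuous_mul_const b)

theorem mem_leftIdealizer_of_mul_mem (hA : IsClosed (A : Set B)) {r t : B}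
    (hdense : (A : Set B) ⊆ closure ((r * ·) '' A)) (htr : t * r ∈ A.leftIdealizer) :
    t ∈ A.leftIdealizer := by
  have himage : (t * ·) '' ((r * ·) '' A) ⊆ A := by
    rintro _ ⟨_, ⟨b, hb, rfl⟩, rfl⟩
    simpa only [mul_assoc, SetLike.mem_coe] using htr b hb
  exact fun a ha => closure_minimal himage hA
    (map_mem_closure (continuous_const_mul t) (hdense ha) (Set.mapsTo_image _ _))

end NonUnitalSubalgebra

theorem cfcₙ_mem_of_star_mem {𝕜 A : Type*} [RCLike 𝕜] [NonUnitalRing A] [StarRing A]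
    [TopologicalSpace A] [Module 𝕜 A] [IsScalarTower 𝕜 A A] [SMulCommClass 𝕜 A A]
    [StarModule 𝕜 A] [IsTopologicalRing A] [ContinuousConstSMul 𝕜 A] [ContinuousStar A]
    [NonUnitalContinuousFunctionalCalculus 𝕜 A IsStarNormal]
    {S : NonUnitalSubalgebra 𝕜 A} (hS : IsClosed (S : Set A)) {a : A} (ha : a ∈ S)
    (ha' : star a ∈ S) (f : 𝕜 → 𝕜) : cfcₙ f a ∈ S := by
  have hadjoin : (NonUnitalStarAlgebra.adjoin 𝕜 {a} : Set A) ⊆ S :=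
    NonUnitalAlgebra.adjoin_le (by simp [Set.insert_subset_iff, Set.star_singleton, ha, ha'])
  exact closure_minimal hadjoin hS (cfcₙ_mem_elemental f a)

namespace ZeroAtInftyContinuousMap

variable {X : Type*} [TopologicalSpace X]

noncomputable def evalNonUnitalStarAlgHom (x : X) : C₀(X, ℂ) →⋆ₙₐ[ℂ] ℂ where
  toFun f := f x
  map_smul' _ _ := rfl
  map_zero' := rfl
  map_add' _ _ := rfl
  map_mul' _ _ := rfl
  map_star' _ := rfl

theorem cfcₙ_apply_apply {f : ℂ → ℂ} (hf : Continuous f) (hf0 : f 0 = 0) (s : C₀(X, ℂ))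
    (x : X) : cfcₙ f s x = f (s x) := by
  have : IsStarNormal s := ⟨Commute.all _ _⟩
  have hev : cfcₙ f s x = cfcₙ f (s x) := (evalNonUnitalStarAlgHom x).map_cfcₙ f s
  rw [hev, cfcₙ_eq_cfc]
  simpa using cfc_algebraMap (A := ℂ) (s x) f

end ZeroAtInftyContinuousMap

namespace Complex

theorem inv_add_I_mul_inv_sub_I (x : ℝ) :
    ((x : ℂ) + I)⁻¹ * ((x : ℂ) - I)⁻¹ = ((1 + x ^ 2)⁻¹ : ℝ) := by
  rw [← mul_inv, ofReal_inv]
  congr 1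
  push_cast
  ring_nf
  rw [I_sq]
  ring

theorem div_sqrt_one_add_sq_mul_inv_add_I (x : ℝ) :
    (x : ℂ) / (√(1 + x ^ 2) : ℝ) * ((x : ℂ) + I)⁻¹ =
      (√(1 + x ^ 2)⁻¹ : ℝ) - I * (((x : ℂ) + I)⁻¹ * (√(1 + x ^ 2)⁻¹ : ℝ)) := by
  have hsqrt : (√(1 + x ^ 2) : ℂ) ≠ 0 := ofReal_ne_zero.mpr (Real.sqrt_pos.mpr (by positivity)).ne'
  have hxI : (x : ℂ) + I ≠ 0 := fun h => by simpa using congrArg im h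
  rw [Real.sqrt_inv]
  push_cast
  field_simp
  ring

end Complex

open Complex in
theorem stmt2_general {E : Type*} [NormedAddCommGroup E] [InnerProductSpace ℂ E] [CompleteSpace E]
    (A : NonUnitalStarSubalgebra ℂ (E →L[ℂ] E))
    (hAclosed : IsClosed (A : Set (E →L[ℂ] E)))
    (φ : C₀(ℝ, ℂ) →⋆ₙₐ[ℂ] (E →L[ℂ] E))
    (rp rm : C₀(ℝ, ℂ))
    (hrp : ∀ x : ℝ, rp x = ((x : ℂ) + Complex.I)⁻¹)
    (hrm : ∀ x : ℝ, rm x = ((x : ℂ) - Complex.I)⁻¹)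
    (hpmem : ∀ a ∈ A, φ rp * a ∈ A)
    (hmmem : ∀ a ∈ A, φ rm * a ∈ A)
    (hpdense : (A : Set (E →L[ℂ] E)) ⊆ closure ((fun a => φ rp * a) '' (A : Set (E →L[ℂ] E))))
    (FH : E →L[ℂ] E) (hFHsa : IsSelfAdjoint FH)
    (hFH : ∀ f g : C₀(ℝ, ℂ),
      (∀ x : ℝ, g x = ((x : ℂ) / (Real.sqrt (1 + x ^ 2) : ℝ)) * f x) → FH * φ f = φ g) :
    ∀ a ∈ A, FH * a ∈ A ∧ a * FH ∈ A := by
  set P := A.toNonUnitalSubalgebra.leftIdealizer.comap φ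
  -- `φ` is continuous, as is every star homomorphism between C⋆-algebras.
  have hP : IsClosed (P : Set C₀(ℝ, ℂ)) :=
    (NonUnitalSubalgebra.isClosed_leftIdealizer hAclosed).preimage (map_continuous φ)
  have hs (x : ℝ) : (rp * rm) x = ((1 + x ^ 2)⁻¹ : ℝ) := by
    simp only [ZeroAtInftyContinuousMap.mul_apply, hrp, hrm, inv_add_I_mul_inv_sub_I]
  have hsP : rp * rm ∈ P := P.mul_mem hpmem hmmem
  have hs_star : star (rp * rm) = rp * rm := by
    ext x
    simp only [ZeroAtInftyContinuousMap.star_apply, hs, RCLike.star_def, conj_ofReal]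
  set ρ := cfcₙ (fun z : ℂ => (√z.re : ℂ)) (rp * rm)
  have hρP : ρ ∈ P := cfcₙ_mem_of_star_mem hP hsP (by rwa [hs_star]) _
  have hρ (x : ℝ) : ρ x = (√(1 + x ^ 2)⁻¹ : ℝ) := by
    rw [ZeroAtInftyContinuousMap.cfcₙ_apply_apply (by fun_prop) (by simp), hs, ofReal_re]
  have hFHrp : FH * φ rp = φ (ρ - I • (rp * ρ)) := hFH _ _ fun x => by
    simp only [ZeroAtInftyContinuousMap.sub_apply, ZeroAtInftyContinuousMap.smul_apply,
      ZeroAtInftyContinuousMap.mul_apply, hρ, hrp, smul_eq_mul,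
      div_sqrt_one_add_sq_mul_inv_add_I]
  have hleft : ∀ a ∈ A, FH * a ∈ A :=
    NonUnitalSubalgebra.mem_leftIdealizer_of_mul_mem hAclosed hpdense
      (hFHrp ▸ P.sub_mem hρP (P.smul_mem I (P.mul_mem hpmem hρP)))
  intro a ha
  refine ⟨hleft a ha, ?_⟩
  simpa only [star_mul, star_star, hFHsa.star_eq] using star_mem (hleft _ (star_mem ha))

/-- Let `H` be a self-adjoint operator on a Hilbert space, encoded through its
continuous functional calculus `φ : C₀(ℝ) → B(E)`, `f ↦ f(H)`, and let `A ⊆ B(E)` be a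
C*-algebra such that `(H+i)⁻¹·A` and `(H-i)⁻¹·A` are dense subsets of `A` (here
`(H±i)⁻¹ = φ r±` with `r± ∈ C₀(ℝ)` the resolvent functions `x ↦ (x ± i)⁻¹`).  Then the bounded
transform `F(H) = H(1+H²)^{-1/2}` — the self-adjoint operator `FH` characterized by
`FH · g(H) = (F·g)(H)` for all `g ∈ C₀(ℝ)`, where `F(x) = x(1+x²)^{-1/2}` — satisfies
`F(H)·a ∈ A` and `a·F(H) ∈ A` for all `a ∈ A`. -/
theorem stmt2 {E : Type*} [NormedAddCommGroup E] [InnerProductSpace ℂ E] [CompleteSpace E]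
    (A : NonUnitalStarSubalgebra ℂ (E →L[ℂ] E))
    (hAclosed : IsClosed (A : Set (E →L[ℂ] E)))
    (φ : C₀(ℝ, ℂ) →⋆ₙₐ[ℂ] (E →L[ℂ] E)) (hφ : Continuous φ)
    (rp rm : C₀(ℝ, ℂ))
    (hrp : ∀ x : ℝ, rp x = ((x : ℂ) + Complex.I)⁻¹)
    (hrm : ∀ x : ℝ, rm x = ((x : ℂ) - Complex.I)⁻¹)
    (hpmem : ∀ a ∈ A, φ rp * a ∈ A)
    (hmmem : ∀ a ∈ A, φ rm * a ∈ A)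
    (hpdense : (A : Set (E →L[ℂ] E)) ⊆ closure ((fun a => φ rp * a) '' (A : Set (E →L[ℂ] E))))
    (hmdense : (A : Set (E →L[ℂ] E)) ⊆ closure ((fun a => φ rm * a) '' (A : Set (E →L[ℂ] E))))
    (FH : E →L[ℂ] E) (hFHsa : IsSelfAdjoint FH) (hFHnorm : ‖FH‖ ≤ 1)
    (hFH : ∀ f g : C₀(ℝ, ℂ),
      (∀ x : ℝ, g x = ((x : ℂ) / (Real.sqrt (1 + x ^ 2) : ℝ)) * f x) → FH * φ f = φ g) :
    ∀ a ∈ A, FH * a ∈ A ∧ a * FH ∈ A :=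
  stmt2_general A hAclosed φ rp rm hrp hrm hpmem hmmem hpdense FH hFHsa hFH
end

section
/- Let A be a C*-algebra, I a closed ideal, and H a self-adjoint multiplier of A. Suppose there exists a positive self-adjoint element V ∈ I such that H² + V ≥ c·1 for some constant c > 0. Then H is invertible modulo I: for every f ∈ C_c((-√c, √c)) one has f(H) ∈ I. -/
set_option synthInstance.maxHeartbeats 1000000

/-!
By Urysohn's lemma pick a continuous `g` with `g = 1` on `{t ^ 2 | t ∈ tsupport f}` and `g = 0` on
`[c, ∞)`. Then `f(H) = f(H) g(H²)`, while `g(H² + V) = 0` because `H² + V ≥ c`; hence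
`f(H) = f(H) (g(H²) - g(H² + V))`. Writing `S = H²`, `T = H² + V`, the difference `g(S) - g(T)`
lies in `J`: for `g = Xⁿ` telescope `S^(n+1) - T^(n+1) = S (Sⁿ - Tⁿ) + (S - T) Tⁿ`, and pass to
continuous `g` by Weierstrass approximation on the spectra.

It remains to multiply by `f(H)`. The operators `m` with `m J + J m ⊆ J` form a closed
`*`-subalgebra, the idealizer of `J`, so it suffices that it contains `H`, i.e. that `J` is also
an ideal for the multipliers of `A`. For `y = m x` with `x ∈ J` one has `y* y = x* (m* m x) ∈ J`,
and `y ∈ J` since `‖y - y u‖² ≤ δ` for `u = min(1, |·|/δ)(y* y) ∈ J`.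
-/

lemma abs_mul_one_sub_min_sq_le {δ : ℝ} (hδ : 0 < δ) (s : ℝ) :
    |s| * (1 - min 1 (|s| / δ)) ^ 2 ≤ δ := by
  rcases le_or_gt |s| δ with hs | hs
  · have hr : |s| / δ ≤ 1 := (div_le_one hδ).2 hs
    have hr₀ : 0 ≤ |s| / δ := by positivity
    rw [min_eq_right hr]
    calc |s| * (1 - |s| / δ) ^ 2 ≤ |s| * 1 := by
          gcongr
          exact pow_le_one₀ (by linarith) (by linarith)
      _ ≤ δ := by rwa [mul_one]
  · rw [min_eq_left ((one_le_div hδ).2 hs.le)]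
    simpa using hδ.le

lemma norm_aeval_sub_cfc_le {B : Type*} [CStarAlgebra B] {a : B} (ha : IsSelfAdjoint a)
    {g : ℝ → ℝ} (hg : ContinuousOn g (spectrum ℝ a)) (p : Polynomial ℝ) {ε : ℝ} (hε : 0 ≤ ε)
    (h : ∀ s ∈ spectrum ℝ a, |p.eval s - g s| ≤ ε) : ‖p.aeval a - cfc g a‖ ≤ ε := by
  rw [← cfc_polynomial p a, ← cfc_sub (p.eval ·) g a]
  exact norm_cfc_le hε h

namespace NonUnitalStarSubalgebra

variable {B : Type*} [CStarAlgebra B]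

def idealizer (J : NonUnitalStarSubalgebra ℂ B) : StarSubalgebra ℂ B where
  carrier := {m | ∀ x ∈ J, m * x ∈ J ∧ x * m ∈ J}
  mul_mem' {m n} hm hn x hx := by
    rw [mul_assoc, ← mul_assoc x]
    exact ⟨(hm _ (hn x hx).1).1, (hn _ (hm x hx).2).2⟩
  one_mem' x hx := by simpa using hx
  add_mem' {m n} hm hn x hx := by
    rw [add_mul, mul_add]
    exact ⟨add_mem (hm x hx).1 (hn x hx).1, add_mem (hm x hx).2 (hn x hx).2⟩
  zero_mem' _ _ := by simp
  algebraMap_mem' r x hx := by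
    rw [Algebra.algebraMap_eq_smul_one, smul_one_mul, mul_smul_one]
    exact ⟨J.smul_mem r hx, J.smul_mem r hx⟩
  star_mem' {m} hm x hx := by
    have h := hm (star x) (star_mem hx)
    rw [← star_star x, ← star_mul, ← star_mul]
    exact ⟨star_mem h.2, star_mem h.1⟩

variable {J : NonUnitalStarSubalgebra ℂ B}

lemma mem_idealizer {m : B} : m ∈ J.idealizer ↔ ∀ x ∈ J, m * x ∈ J ∧ x * m ∈ J := Iff.rfl

lemma mem_idealizer_of_mem {m : B} (hm : m ∈ J) : m ∈ J.idealizer :=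
  fun _ hx => ⟨mul_mem hm hx, mul_mem hx hm⟩

lemma isClosed_idealizer (hJ : IsClosed (J : Set B)) : IsClosed (J.idealizer : Set B) := by
  have : (J.idealizer : Set B) = ⋂ x ∈ J, ((· * x) ⁻¹' J ∩ (x * ·) ⁻¹' J) := by
    ext m
    simp [mem_idealizer]
  rw [this]
  exact isClosed_biInter fun x _ =>
    (hJ.preimage (continuous_mul_const x)).inter (hJ.preimage (continuous_const_mul x))

lemma norm_sub_mul_cfc_min_sq_le (y : B) {δ : ℝ} (hδ : 0 < δ) :
    ‖y - y * cfc (fun s => min 1 (|s| / δ)) (star y * y)‖ ^ 2 ≤ δ := by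
  set t := star y * y
  set u := cfc (fun s => min 1 (|s| / δ)) t
  have hu : 1 - u = cfc (fun s => 1 - min 1 (|s| / δ)) t := by
    rw [cfc_sub .., cfc_const_one ..]
  have hsq : star (y - y * u) * (y - y * u) =
      cfc (fun s => (1 - min 1 (|s| / δ)) * s * (1 - min 1 (|s| / δ))) t := by
    have hu_sa : star (1 - u) = 1 - u := (hu ▸ cfc_predicate _ t : IsSelfAdjoint (1 - u)).star_eq
    rw [cfc_mul .., cfc_mul .., cfc_id' .., ← hu, ← mul_one_sub, star_mul, hu_sa]
    simp only [t, mul_assoc]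
  rw [sq, ← CStarRing.norm_star_mul_self, hsq]
  refine norm_cfc_le hδ.le fun s _ => ?_
  rw [Real.norm_eq_abs, mul_comm, ← mul_assoc, ← sq, abs_mul, abs_sq, mul_comm]
  exact abs_mul_one_sub_min_sq_le hδ s

lemma mem_of_star_mul_self_mem (hJ : IsClosed (J : Set B)) {y : B} (hyJ : ∀ x ∈ J, y * x ∈ J)
    (hy : star y * y ∈ J) : y ∈ J := by
  rw [← SetLike.mem_coe, ← hJ.closure_eq, Metric.mem_closure_iff]
  intro ε hε
  have hδ : 0 < (ε / 2) ^ 2 := by positivity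
  have hu : cfc (fun s => min 1 (|s| / (ε / 2) ^ 2)) (star y * y) ∈ J := by
    rw [← cfcₙ_eq_cfc (by fun_prop) (by simp)]
    exact cfcₙ_mem (hs := hJ) _ hy
  refine ⟨_, hyJ _ hu, ?_⟩
  rw [dist_eq_norm]
  have hle := abs_le_of_sq_le_sq' (norm_sub_mul_cfc_min_sq_le y hδ) (by positivity)
  linarith [hle.2]

theorem idealizer_le_idealizer {A : NonUnitalStarSubalgebra ℂ B} (hJ : IsClosed (J : Set B))
    (hJA : J ≤ A) (hAJ : (A : Set B) ⊆ J.idealizer) : A.idealizer ≤ J.idealizer := by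
  have mul_mem_left : ∀ m ∈ A.idealizer, ∀ x ∈ J, m * x ∈ J := by
    intro m hm x hx
    have hmx : m * x ∈ A := (hm x (hJA hx)).1
    refine mem_of_star_mul_self_mem hJ (fun z hz => (hAJ hmx z hz).1) ?_
    have hmmx : star m * (m * x) ∈ A := (star_mem hm _ hmx).1
    rw [star_mul, mul_assoc]
    exact (hAJ hmmx _ (star_mem hx)).2
  intro m hm x hx
  refine ⟨mul_mem_left m hm x hx, ?_⟩
  rw [← star_star (x * m), star_mul]
  exact star_mem (mul_mem_left _ (star_mem hm) _ (star_mem hx))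

section Difference

variable {S T : B} (hS : S ∈ J.idealizer) (hT : T ∈ J.idealizer) (hST : S - T ∈ J)
include hS hT hST

lemma pow_sub_pow_mem (n : ℕ) : S ^ n - T ^ n ∈ J := by
  induction n with
  | zero => simp
  | succ n ih =>
    rw [pow_succ' S, pow_succ' T,
      show S * S ^ n - T * T ^ n = S * (S ^ n - T ^ n) + (S - T) * T ^ n by noncomm_ring]
    exact add_mem (hS _ ih).1 ((pow_mem hT n) _ hST).2

lemma aeval_sub_aeval_mem (p : Polynomial ℝ) : p.aeval S - p.aeval T ∈ J := by
  simp only [Polynomial.aeval_eq_sum_range, ← Finset.sum_sub_distrib, ← smul_sub]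
  refine sum_mem fun i _ => ?_
  rw [← algebraMap_smul ℂ (p.coeff i)]
  exact J.smul_mem _ (pow_sub_pow_mem hS hT hST i)

theorem cfc_sub_cfc_mem (hJ : IsClosed (J : Set B)) (hSsa : IsSelfAdjoint S)
    (hTsa : IsSelfAdjoint T) {g : ℝ → ℝ} (hg : Continuous g) : cfc g S - cfc g T ∈ J := by
  obtain ⟨R, hR⟩ :=
    ((spectrum.isBounded (𝕜 := ℝ) S).union (spectrum.isBounded T)).subset_closedBall 0
  rw [Real.closedBall_eq_Icc] at hR
  rw [← SetLike.mem_coe, ← hJ.closure_eq, Metric.mem_closure_iff]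
  intro ε hε
  obtain ⟨p, hp⟩ :=
    exists_polynomial_near_of_continuousOn _ _ g hg.continuousOn (ε / 3) (by positivity)
  have hnear {a : B} (ha : IsSelfAdjoint a) (hσ : spectrum ℝ a ⊆ Set.Icc (0 - R) (0 + R)) :
      ‖p.aeval a - cfc g a‖ ≤ ε / 3 :=
    norm_aeval_sub_cfc_le ha hg.continuousOn p (by positivity) fun s hs => (hp s (hσ hs)).le
  refine ⟨_, aeval_sub_aeval_mem hS hT hST p, ?_⟩
  rw [dist_comm, dist_eq_norm, sub_sub_sub_comm]
  calc _ ≤ ‖p.aeval S - cfc g S‖ + ‖p.aeval T - cfc g T‖ := norm_sub_le _ _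
    _ ≤ ε / 3 + ε / 3 := add_le_add (hnear hSsa (Set.subset_union_left.trans hR))
        (hnear hTsa (Set.subset_union_right.trans hR))
    _ < ε := by linarith

end Difference

end NonUnitalStarSubalgebra

theorem stmt11_general {E : Type*} [NormedAddCommGroup E] [InnerProductSpace ℂ E] [CompleteSpace E]
    (A : NonUnitalStarSubalgebra ℂ (E →L[ℂ] E))
    (J : NonUnitalStarSubalgebra ℂ (E →L[ℂ] E))
    (hJA : (J : Set (E →L[ℂ] E)) ⊆ (A : Set (E →L[ℂ] E)))
    (hJclosed : IsClosed (J : Set (E →L[ℂ] E)))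
    (hJideal : ∀ a ∈ A, ∀ x ∈ J, a * x ∈ J ∧ x * a ∈ J)
    (H : E →L[ℂ] E) (hH : IsSelfAdjoint H)
    (hHmul : IsMultiplierOf (A : Set (E →L[ℂ] E)) H)
    (V : E →L[ℂ] E) (hVJ : V ∈ J) (hVpos : (0 : E →L[ℂ] E) ≤ V)
    (c : ℝ)
    (hbound : (c : ℂ) • (1 : E →L[ℂ] E) ≤ H ^ 2 + V) :
    ∀ f : ℝ → ℝ, Continuous f →
      tsupport f ⊆ Set.Ioo (-Real.sqrt c) (Real.sqrt c) → cfc f H ∈ J := by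
  intro f hf hsupp
  have hHJ : H ∈ J.idealizer :=
    NonUnitalStarSubalgebra.idealizer_le_idealizer hJclosed hJA (hJideal · ·) hHmul
  have hTsa : IsSelfAdjoint (H ^ 2 + V) := (hH.pow 2).add (.of_nonneg hVpos)
  have hσT : spectrum ℝ (H ^ 2 + V) ⊆ Set.Ici c := by
    refine (algebraMap_le_iff_le_spectrum hTsa).1 ?_
    rwa [Algebra.algebraMap_eq_smul_one, ← algebraMap_smul ℂ c, Complex.coe_algebraMap]
  have hK : IsCompact ((· ^ 2) '' tsupport f) :=
    (Metric.isCompact_of_isClosed_isBounded (isClosed_tsupport f)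
      ((Metric.isBounded_Ioo _ _).subset hsupp)).image (continuous_pow 2)
  obtain ⟨g, hg0, hg1, -⟩ := exists_continuous_zero_one_of_isCompact' hK isClosed_Ici <| by
    rw [Set.disjoint_left]
    rintro _ ⟨t, ht, rfl⟩
    exact not_le.2 (Real.sq_lt.2 (hsupp ht))
  have hgT : cfc g (H ^ 2 + V) = 0 := by
    rw [cfc_congr fun s hs => hg0 (hσT hs), cfc_zero]
  have hfg : cfc f H = cfc f H * (cfc g (H ^ 2) - cfc g (H ^ 2 + V)) := by
    rw [hgT, sub_zero, ← cfc_comp_pow .., ← cfc_mul ..]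
    refine cfc_congr fun t _ => ?_
    by_cases ht : t ∈ tsupport f
    · simp [hg1 ⟨t, ht, rfl⟩]
    · simp [image_eq_zero_of_notMem_tsupport ht]
  rw [hfg]
  refine (cfc_mem (hs := J.isClosed_idealizer hJclosed) f hHJ _ ?_).1
  exact NonUnitalStarSubalgebra.cfc_sub_cfc_mem (pow_mem hHJ 2)
    (add_mem (pow_mem hHJ 2) (J.mem_idealizer_of_mem hVJ))
    (by rw [sub_add_cancel_left]; exact neg_mem hVJ) hJclosed (hH.pow 2) hTsa g.continuous

/-- Let `A ⊆ B(E)` be a C*-algebra, `J` a closed (two-sided) ideal of `A`,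
and `H` a self-adjoint multiplier of `A`.  Suppose there exists a positive self-adjoint
element `V ∈ J` such that `H² + V ≥ c·1` for some constant `c > 0`.  Then `H` is invertible
modulo `J`: for every continuous `f` compactly supported in `(-√c, √c)` one has `f(H) ∈ J`. -/
theorem stmt11 {E : Type*} [NormedAddCommGroup E] [InnerProductSpace ℂ E] [CompleteSpace E]
    (A : NonUnitalStarSubalgebra ℂ (E →L[ℂ] E))
    (hAclosed : IsClosed (A : Set (E →L[ℂ] E)))
    (J : NonUnitalStarSubalgebra ℂ (E →L[ℂ] E))
    (hJA : (J : Set (E →L[ℂ] E)) ⊆ (A : Set (E →L[ℂ] E)))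
    (hJclosed : IsClosed (J : Set (E →L[ℂ] E)))
    (hJideal : ∀ a ∈ A, ∀ x ∈ J, a * x ∈ J ∧ x * a ∈ J)
    (H : E →L[ℂ] E) (hH : IsSelfAdjoint H)
    (hHmul : IsMultiplierOf (A : Set (E →L[ℂ] E)) H)
    (V : E →L[ℂ] E) (hVJ : V ∈ J) (hVpos : (0 : E →L[ℂ] E) ≤ V)
    (c : ℝ) (hc : 0 < c)
    (hbound : (c : ℂ) • (1 : E →L[ℂ] E) ≤ H ^ 2 + V) :
    ∀ f : ℝ → ℝ, Continuous f →
      tsupport f ⊆ Set.Ioo (-Real.sqrt c) (Real.sqrt c) → cfc f H ∈ J :=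
  stmt11_general A J hJA hJclosed hJideal H hH hHmul V hVJ hVpos c hbound
end

section
/- Let Θ be a normalizing function with support of Θ' contained in an open interval Δ around 0, and let H, H' be self-adjoint multipliers of a C*-algebra A that are locally I-comparable in Δ (f(H) - f(H') ∈ I for all f ∈ C_c(Δ), I a closed ideal). Then e^{iπΘ(H)} - e^{iπΘ(H')} ∈ I, so that e^{iπΘ(H)} e^{-iπΘ(H')} - 1 ∈ I whenever additionally e^{iπΘ(H')} is a multiplier of I. -/
open scoped ZeroAtInfty

set_option maxHeartbeats 1000000 in
/-- Let `Θ` be a normalizing function (smooth, nondecreasing, `Θ(0) = 0`,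
`Θ'(0) > 0`, `Θ² - 1 ∈ C₀(ℝ)`) with `supp Θ'` contained in an open interval `Δ = (a,b)`
around `0`, and let `H, H'` be self-adjoint multipliers of a C*-algebra `A ⊆ B(E)` (with
functional calculi `φ, ψ : C₀(ℝ) → B(E)`) that are locally `J`-comparable in `Δ`:
`f(H) - f(H') ∈ J` for all `f ∈ C_c(Δ)`, where `J` is a closed ideal of `A`.  Then
`e^{iπΘ(H)} - e^{iπΘ(H')} ∈ J`, and `e^{iπΘ(H)}·e^{-iπΘ(H')} - 1 ∈ J` whenever additionally
`e^{iπΘ(H')}` is a multiplier of `J`.  Here `e^{iπΘ(H)} = φ g - 1` with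
`g = e^{iπΘ} + 1 ∈ C₀(ℝ)` and `e^{-iπΘ(H')} = star (ψ g - 1)`. -/
theorem stmt18 {E : Type*} [NormedAddCommGroup E] [InnerProductSpace ℂ E] [CompleteSpace E]
    (A : NonUnitalStarSubalgebra ℂ (E →L[ℂ] E))
    (hAclosed : IsClosed (A : Set (E →L[ℂ] E)))
    (J : NonUnitalStarSubalgebra ℂ (E →L[ℂ] E))
    (hJA : (J : Set (E →L[ℂ] E)) ⊆ (A : Set (E →L[ℂ] E)))
    (hJclosed : IsClosed (J : Set (E →L[ℂ] E)))
    (hJideal : ∀ x ∈ A, ∀ y ∈ J, x * y ∈ J ∧ y * x ∈ J)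
    (φ ψ : C₀(ℝ, ℂ) →⋆ₙₐ[ℂ] (E →L[ℂ] E)) (hφ : Continuous φ) (hψ : Continuous ψ)
    (hφmul : ∀ f : C₀(ℝ, ℂ), ∀ a ∈ A, φ f * a ∈ A ∧ a * φ f ∈ A)
    (hψmul : ∀ f : C₀(ℝ, ℂ), ∀ a ∈ A, ψ f * a ∈ A ∧ a * ψ f ∈ A)
    (a b : ℝ) (ha : a < 0) (hb : 0 < b)
    (hloc : ∀ f : C₀(ℝ, ℂ), HasCompactSupport ⇑f → tsupport ⇑f ⊆ Set.Ioo a b →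
      φ f - ψ f ∈ J)
    (Θ : ℝ → ℝ) (hΘsmooth : ContDiff ℝ (⊤ : ℕ∞) Θ) (hΘmono : Monotone Θ)
    (hΘ0 : Θ 0 = 0) (hΘ'0 : 0 < deriv Θ 0)
    (hΘtop : Filter.Tendsto (fun x => Θ x ^ 2 - 1) Filter.atTop (nhds 0))
    (hΘbot : Filter.Tendsto (fun x => Θ x ^ 2 - 1) Filter.atBot (nhds 0))
    (hΘsupp : tsupport (deriv Θ) ⊆ Set.Ioo a b)
    (g : C₀(ℝ, ℂ))
    (hg : ∀ x : ℝ, g x = Complex.exp (Real.pi * Complex.I * Θ x) + 1) :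
    ((φ g - 1) - (ψ g - 1) ∈ J) ∧
      ((∀ x ∈ J, star (ψ g - 1) * x ∈ J ∧ x * star (ψ g - 1) ∈ J) →
        (φ g - 1) * star (ψ g - 1) - 1 ∈ J) := by
  have hderiv0 : ∀ x, x ∉ Set.Ioo a b → deriv Θ x = 0 := fun x hx =>
    image_eq_zero_of_notMem_tsupport (fun h => hx (hΘsupp h))
  have hdiff : Differentiable ℝ Θ := hΘsmooth.differentiable (by simp)
  -- Θ is constant to the right of b
  have hright : ∀ x, b ≤ x → Θ x = Θ b := by
    intro x hx
    have hanti : AntitoneOn Θ (Set.Ici b) := by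
      apply antitoneOn_of_deriv_nonpos (convex_Ici b) hdiff.continuous.continuousOn
        hdiff.differentiableOn
      intro y hy
      rw [interior_Ici] at hy
      exact le_of_eq (hderiv0 y (fun hyo => absurd hyo.2 (not_lt.mpr hy.le)))
    exact le_antisymm (hanti Set.self_mem_Ici hx hx) (hΘmono hx)
  -- Θ is constant to the left of a
  have hleft : ∀ x, x ≤ a → Θ x = Θ a := by
    intro x hx
    have hanti : AntitoneOn Θ (Set.Iic a) := by
      apply antitoneOn_of_deriv_nonpos (convex_Iic a) hdiff.continuous.continuousOn
        hdiff.differentiableOn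
      intro y hy
      rw [interior_Iic] at hy
      exact le_of_eq (hderiv0 y (fun hyo => absurd hyo.1 (not_lt.mpr hy.le)))
    exact le_antisymm (hΘmono hx) (hanti hx Set.self_mem_Iic hx)
  have hΘb : Θ b = 1 := by
    have hconst : Filter.Tendsto (fun x => Θ x ^ 2 - 1) Filter.atTop (nhds (Θ b ^ 2 - 1)) := by
      refine tendsto_const_nhds.congr' ?_
      filter_upwards [Filter.eventually_ge_atTop b] with x hx
      rw [hright x hx]
    have h2 : Θ b ^ 2 - 1 = 0 := tendsto_nhds_unique hconst hΘtop
    have h0 : (0 : ℝ) ≤ Θ b := by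
      have := hΘmono hb.le; rw [hΘ0] at this; exact this
    nlinarith [sq_nonneg (Θ b - 1), sq_nonneg (Θ b + 1)]
  have hΘa : Θ a = -1 := by
    have hconst : Filter.Tendsto (fun x => Θ x ^ 2 - 1) Filter.atBot (nhds (Θ a ^ 2 - 1)) := by
      refine tendsto_const_nhds.congr' ?_
      filter_upwards [Filter.eventually_le_atBot a] with x hx
      rw [hleft x hx]
    have h2 : Θ a ^ 2 - 1 = 0 := tendsto_nhds_unique hconst hΘbot
    have h0 : Θ a ≤ 0 := by
      have := hΘmono ha.le; rw [hΘ0] at this; exact this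
    nlinarith [sq_nonneg (Θ a - 1), sq_nonneg (Θ a + 1)]
  -- g vanishes outside (a, b)
  have hgzero : ∀ x, x ∉ Set.Ioo a b → g x = 0 := by
    intro x hx
    rw [Set.mem_Ioo, not_and_or, not_lt, not_lt] at hx
    rcases hx with hx | hx
    · have hΘx : Θ x = -1 := (hleft x hx).trans hΘa
      rw [hg, hΘx]
      rw [show ((Real.pi : ℂ) * Complex.I * ((-1 : ℝ) : ℂ)) = -(Real.pi * Complex.I) by
        push_cast; ring]
      rw [Complex.exp_neg, Complex.exp_pi_mul_I]
      norm_num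
    · have hΘx : Θ x = 1 := (hright x hx).trans hΘb
      rw [hg, hΘx]
      rw [show ((Real.pi : ℂ) * Complex.I * ((1 : ℝ) : ℂ)) = Real.pi * Complex.I by
        push_cast; ring]
      rw [Complex.exp_pi_mul_I]
      norm_num
  -- scaling parameters
  set c : ℕ → ℝ := fun n => 1 + 1 / (n + 1) with hc
  have hc1 : ∀ n, 1 < c n := by
    intro n
    have : (0 : ℝ) < 1 / (n + 1) := by positivity
    simp only [hc]; linarith
  have hcpos : ∀ n, 0 < c n := fun n => lt_trans one_pos (hc1 n)
  have hzero' : ∀ n x, x ∉ Set.Icc a b → g (c n * x) = 0 := by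
    intro n x hx
    apply hgzero
    rw [Set.mem_Icc, not_and_or, not_le, not_le] at hx
    intro hmem
    rw [Set.mem_Ioo] at hmem
    rcases hx with hx | hx
    · nlinarith [hmem.1, hc1 n, hcpos n]
    · nlinarith [hmem.2, hc1 n, hcpos n]
  -- the approximating sequence
  set F : ℕ → C₀(ℝ, ℂ) := fun n =>
    { toFun := fun x => g (c n * x)
      continuous_toFun := g.continuous.comp (continuous_const.mul continuous_id)
      zero_at_infty' := by
        refine Filter.Tendsto.congr'
          (Filter.eventuallyEq_of_mem
            (Filter.mem_cocompact.mpr ⟨Set.Icc a b, isCompact_Icc, subset_rfl⟩)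
            (fun x hx => (hzero' n x hx).symm)) tendsto_const_nhds } with hF
  have hFapply : ∀ n x, F n x = g (c n * x) := fun n x => rfl
  have hFcompact : ∀ n, HasCompactSupport ⇑(F n) := fun n =>
    HasCompactSupport.intro isCompact_Icc (hzero' n)
  have hFsupp : ∀ n, tsupport ⇑(F n) ⊆ Set.Ioo a b := by
    intro n
    have hsub : Function.support ⇑(F n) ⊆ Set.Icc (a / c n) (b / c n) := by
      intro x hx
      rw [Function.mem_support] at hx
      have hmem : c n * x ∈ Set.Ioo a b := by
        by_contra hnm
        exact hx (hgzero _ hnm)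
      rw [Set.mem_Ioo] at hmem
      constructor
      · rw [div_le_iff₀ (hcpos n)]; nlinarith [hmem.1]
      · rw [le_div_iff₀ (hcpos n)]; nlinarith [hmem.2]
    have htsub : tsupport ⇑(F n) ⊆ Set.Icc (a / c n) (b / c n) :=
      closure_minimal hsub isClosed_Icc
    refine htsub.trans ?_
    intro x hx
    rw [Set.mem_Icc] at hx
    constructor
    · have : a < a / c n := by
        rw [lt_div_iff₀ (hcpos n)]; nlinarith [hc1 n]
      linarith [hx.1]
    · have : b / c n < b := by
        rw [div_lt_iff₀ (hcpos n)]; nlinarith [hc1 n]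
      linarith [hx.2]
  -- convergence F n → g
  set M : ℝ := max (-a) b with hM
  have hMpos : 0 < M := lt_max_of_lt_right hb
  have htend : Filter.Tendsto F Filter.atTop (nhds g) := by
    rw [Metric.tendsto_atTop]
    intro ε hε
    obtain ⟨δ, hδ, hδ'⟩ := Metric.uniformContinuous_iff.mp
      (ZeroAtInftyContinuousMap.uniformContinuous g) (ε / 2) (half_pos hε)
    obtain ⟨N, hN⟩ := exists_nat_gt (M / δ)
    refine ⟨N, fun n hn => ?_⟩
    have hkey : ∀ x : ℝ, dist (F n x) (g x) ≤ ε / 2 := by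
      intro x
      by_cases hx : x ∈ Set.Icc a b
      · refine le_of_lt (hδ' ?_)
        rw [Set.mem_Icc] at hx
        have hxabs : |x| ≤ M := by
          rw [abs_le]
          constructor
          · have : -a ≤ M := le_max_left _ _; linarith [hx.1]
          · have : b ≤ M := le_max_right _ _; linarith [hx.2]
        have hdist : dist (c n * x) x = |x| / (n + 1) := by
          rw [Real.dist_eq]
          have : c n * x - x = x / (n + 1) := by
            simp only [hc]; field_simp; ring
          rw [this, abs_div]
          congr 1
          rw [abs_of_pos]; positivity
        rw [hdist]
        have h1 : |x| / (n + 1) ≤ M / (N + 1) := by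
          apply div_le_div₀ hMpos.le hxabs (by positivity)
          have : (N : ℝ) ≤ n := Nat.cast_le.mpr hn
          linarith
        have h2 : M / (N + 1) < δ := by
          rw [div_lt_iff₀ (by positivity)]
          rw [div_lt_iff₀ hδ] at hN
          nlinarith [hδ]
        linarith
      · rw [hFapply, hzero' n x hx, hgzero x (fun hm => hx ⟨hm.1.le, hm.2.le⟩)]
        simp [half_pos hε |>.le]
    have : dist (F n) g ≤ ε / 2 := by
      rw [← ZeroAtInftyContinuousMap.dist_toBCF_eq_dist]
      exact (BoundedContinuousFunction.dist_le (half_pos hε).le).mpr hkey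
    linarith [half_lt_self hε]
  -- main membership
  have hmem : φ g - ψ g ∈ J := by
    have htt : Filter.Tendsto (fun n => φ (F n) - ψ (F n)) Filter.atTop (nhds (φ g - ψ g)) :=
      ((hφ.tendsto g).comp htend).sub ((hψ.tendsto g).comp htend)
    exact hJclosed.mem_of_tendsto htt
      (Filter.Eventually.of_forall fun n => hloc (F n) (hFcompact n) (hFsupp n))
  constructor
  · have heq : (φ g - 1) - (ψ g - 1) = φ g - ψ g := by abel
    rw [heq]; exact hmem
  · intro hmul
    -- (ψ g - 1) is "unitary": (ψ g - 1) * star (ψ g - 1) = 1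
    have hgg : g * star g = g + star g := by
      ext x
      have hstarx : (star g) x = star (g x) := rfl
      simp only [ZeroAtInftyContinuousMap.coe_mul, ZeroAtInftyContinuousMap.coe_add,
        Pi.mul_apply, Pi.add_apply]
      rw [hstarx, hg x]
      have hconj : star (Complex.exp (Real.pi * Complex.I * Θ x) + 1)
          = Complex.exp (Real.pi * -Complex.I * Θ x) + 1 := by
        rw [star_add, star_one]
        rw [show (star (Complex.exp (Real.pi * Complex.I * Θ x)) : ℂ)
            = (starRingEnd ℂ) (Complex.exp (Real.pi * Complex.I * Θ x)) from rfl]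
        rw [← Complex.exp_conj]
        congr 1
        simp [map_mul, Complex.conj_I, Complex.conj_ofReal]
      rw [hconj]
      have h1 : Complex.exp (Real.pi * Complex.I * Θ x)
          * Complex.exp (Real.pi * -Complex.I * Θ x) = 1 := by
        rw [← Complex.exp_add,
          show (Real.pi * Complex.I * Θ x + Real.pi * -Complex.I * Θ x : ℂ) = 0 by ring,
          Complex.exp_zero]
      linear_combination h1
    have hstarψ : star (ψ g - 1) = ψ (star g) - 1 := by
      simp only [star_sub, star_one, map_star]
    have key : (ψ g - 1) * star (ψ g - 1) = 1 := by
      rw [hstarψ, sub_mul, mul_sub, mul_sub, one_mul, mul_one, ← map_mul, hgg, map_add]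
      abel
    have hψs : ψ g * star (ψ g - 1) = 1 + star (ψ g - 1) := by
      rw [sub_mul, one_mul, sub_eq_iff_eq_add] at key
      exact key
    have heq : (φ g - 1) * star (ψ g - 1) - 1 = (φ g - ψ g) * star (ψ g - 1) := by
      rw [sub_mul, sub_mul, hψs, one_mul]
      abel
    rw [heq]
    exact (hmul _ hmem).2
end

section
/- For the half-line Schrödinger operator family H(k) = k² - d²/dy² on L²(ℝ₊) with Robin-type boundary condition determined by W(k,z) = K - ikL - M·μ(k,z) where μ(k,z) = √(k² - z) (positive real part) and K, L, M real with M ≠ 0, the bound-state energies λ < k² are exactly λ(k) = k² - (K + ikL)²/M² subject to (K + ikL)/(-M) > 0; in particular for K = 0, |L| = |M| there is a flat band λ(k) = 0 on a half-line of momenta. -/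
/-!
The decaying exponential `e^{-μy}` solves `-ψ'' + k²ψ = λψ` iff `μ² = k² - λ`, and satisfies the
Robin condition iff `K + kℓ + Mμ = 0`. The latter forces `μ = (K + kℓ)/(-M)`, so a bound state
exists iff this number is positive, and then `λ = k² - μ²`. For `K = 0` and `ℓ² = M²` this
gives `μ² = k²`, i.e. `λ = 0`.
-/

open Complex

lemma hasDerivAt_cexp_mul_ofReal (c : ℂ) (y : ℝ) :
    HasDerivAt (fun y : ℝ => exp (c * y)) (c * exp (c * y)) y := by
  simpa [mul_comm] using (((hasDerivAt_id (y : ℂ)).const_mul c).cexp).comp_ofReal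

lemma deriv_cexp_mul_ofReal (c : ℂ) :
    deriv (fun y : ℝ => exp (c * y)) = fun y : ℝ => c * exp (c * y) :=
  funext fun y => (hasDerivAt_cexp_mul_ofReal c y).deriv

lemma deriv_deriv_cexp_mul_ofReal (c : ℂ) (y : ℝ) :
    deriv (deriv fun y : ℝ => exp (c * y)) y = c ^ 2 * exp (c * y) := by
  rw [deriv_cexp_mul_ofReal]
  simpa [pow_two, mul_assoc] using ((hasDerivAt_cexp_mul_ofReal c y).const_mul c).deriv

lemma cexp_mul_ofReal_solves_iff (c κ ν : ℂ) :
    (∀ y : ℝ, -deriv (deriv fun y : ℝ => exp (c * y)) y + κ * exp (c * y) = ν * exp (c * y)) ↔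
      c ^ 2 = κ - ν := by
  simp_rw [deriv_deriv_cexp_mul_ofReal]
  constructor
  · intro h
    have h0 : c ^ 2 * exp (c * (0 : ℝ)) = (κ - ν) * exp (c * (0 : ℝ)) := by
      linear_combination -(h 0)
    simpa using h0
  · intro h y
    rw [h]
    ring

lemma robin_condition_cexp_iff (a M μ : ℝ) :
    (a : ℂ) * exp (-(μ : ℂ) * (0 : ℝ)) - M * deriv (fun y : ℝ => exp (-(μ : ℂ) * y)) 0 = 0 ↔
      a + M * μ = 0 := by
  rw [deriv_cexp_mul_ofReal]
  simp only [ofReal_zero, mul_zero, exp_zero, mul_one]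
  rw [← ofReal_eq_zero (z := a + M * μ)]
  push_cast
  constructor <;> intro h <;> linear_combination h

lemma exists_cexp_boundState_iff (a M k lam : ℝ) :
    (∃ ψ : ℝ → ℂ, ∃ μ : ℝ, 0 < μ ∧
        (∀ y : ℝ, ψ y = exp (-(μ : ℂ) * y)) ∧
        (∀ y : ℝ, -(deriv (deriv ψ) y) + (k ^ 2 : ℂ) * ψ y = (lam : ℂ) * ψ y) ∧
        (a : ℂ) * ψ 0 - (M : ℂ) * deriv ψ 0 = 0) ↔
      ∃ μ : ℝ, 0 < μ ∧ μ ^ 2 = k ^ 2 - lam ∧ a + M * μ = 0 := by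
  constructor
  · rintro ⟨ψ, μ, hμ, hψ, hode, hbc⟩
    obtain rfl : ψ = fun y : ℝ => exp (-(μ : ℂ) * y) := funext hψ
    refine ⟨μ, hμ, ?_, (robin_condition_cexp_iff a M μ).1 hbc⟩
    have h := (cexp_mul_ofReal_solves_iff _ _ _).1 hode
    rw [neg_sq] at h
    exact_mod_cast h
  · rintro ⟨μ, hμ, hμsq, hbc⟩
    refine ⟨_, μ, hμ, fun y => rfl, ?_, (robin_condition_cexp_iff a M μ).2 hbc⟩
    rw [cexp_mul_ofReal_solves_iff, neg_sq]
    exact_mod_cast hμsq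

lemma exists_decay_rate_iff (a M k lam : ℝ) (hM : M ≠ 0) :
    (∃ μ : ℝ, 0 < μ ∧ μ ^ 2 = k ^ 2 - lam ∧ a + M * μ = 0) ↔
      lam = k ^ 2 - a ^ 2 / M ^ 2 ∧ 0 < a / (-M) := by
  have hμ_iff (μ : ℝ) : a + M * μ = 0 ↔ μ = a / (-M) := by
    rw [eq_div_iff (neg_ne_zero.mpr hM)]
    constructor <;> intro h <;> linarith
  simp only [hμ_iff, exists_eq_right_right, div_pow, neg_sq]
  constructor
  · rintro ⟨hpos, hsq⟩
    exact ⟨by linarith, hpos⟩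
  · rintro ⟨hlam, hpos⟩
    exact ⟨hpos, by linarith⟩

/-- For the half-line Schrödinger operator family `H(k) = k² - d²/dy²` on
`L²(ℝ₊)` with Robin-type boundary condition determined by `K, L, M` (with `K, iL =: ℓ, M`
real after normalizing phases, `M ≠ 0`), the bound states at energy `λ < k²` are the decaying
solutions `ψ(y) = e^{-μy}` (`μ = √(k² - λ) > 0`) of `-ψ'' + k²ψ = λψ` satisfying the boundary
condition `(K + kℓ)ψ(0) - Mψ'(0) = 0`; these exist exactly when
`λ = k² - (K + kℓ)²/M²` subject to `(K + kℓ)/(-M) > 0`.  In particular for `K = 0`,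
`|ℓ| = |M|` there is a flat band `λ(k) = 0` on the half-line of momenta `{k : kℓ/(-M) > 0}`. -/
theorem stmt19 (K ℓ M : ℝ) (hM : M ≠ 0) :
    (∀ k lam : ℝ, lam < k ^ 2 →
      ((∃ ψ : ℝ → ℂ, ∃ μ : ℝ, 0 < μ ∧
          (∀ y : ℝ, ψ y = Complex.exp (-(μ : ℂ) * y)) ∧
          (∀ y : ℝ, -(deriv (deriv ψ) y) + (k ^ 2 : ℂ) * ψ y = (lam : ℂ) * ψ y) ∧
          ((K + k * ℓ : ℝ) : ℂ) * ψ 0 - (M : ℂ) * deriv ψ 0 = 0) ↔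
        (lam = k ^ 2 - (K + k * ℓ) ^ 2 / M ^ 2 ∧ 0 < (K + k * ℓ) / (-M)))) ∧
    (K = 0 → |ℓ| = |M| → ∀ k : ℝ, 0 < k * ℓ / (-M) →
      ∃ ψ : ℝ → ℂ, ∃ μ : ℝ, 0 < μ ∧
        (∀ y : ℝ, ψ y = Complex.exp (-(μ : ℂ) * y)) ∧
        (∀ y : ℝ, -(deriv (deriv ψ) y) + (k ^ 2 : ℂ) * ψ y = (0 : ℂ)) ∧
        ((K + k * ℓ : ℝ) : ℂ) * ψ 0 - (M : ℂ) * deriv ψ 0 = 0) := by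
  have boundStates (k lam : ℝ) := (exists_cexp_boundState_iff (K + k * ℓ) M k lam).trans
    (exists_decay_rate_iff (K + k * ℓ) M k lam hM)
  refine ⟨fun k lam _ => boundStates k lam, ?_⟩
  rintro rfl hℓM k hk
  have hsq : ℓ ^ 2 = M ^ 2 := sq_eq_sq_iff_abs_eq_abs ℓ M |>.2 hℓM
  have hflat : (0 : ℝ) = k ^ 2 - (0 + k * ℓ) ^ 2 / M ^ 2 := by
    rw [zero_add, mul_pow, hsq, mul_div_cancel_right₀ _ (pow_ne_zero 2 hM), sub_self]
  simpa using (boundStates k 0).2 ⟨hflat, by simpa using hk⟩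
end
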